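/- Let f(s) = H⁻¹(√2|s|) where H(t) = ∫_1^t (log x)^{-1/2} dx. Then f(s)/(√2 |s| (log|s|)^{1/2}) → 1 as |s| → ∞. -/

import Mathlib

open Real Set Filter

/-- `H t = ∫_1^t (log x)^{-1/2} dx`. -/
noncomputable def Hfun (t : ℝ) : ℝ := ∫ x in (1:ℝ)..t, (Real.log x) ^ (-(1:ℝ)/2)

/-!
Since `H' t = (log t)^{-1/2}` and `(t / √(log t))' = (log t)^{-1/2} (1 - 1 / (2 log t))`,
L'Hôpital's rule in the `∞ / ∞` form gives `H t ~ t / √(log t)`. Taking logarithms,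
`log (H u / c) ~ log u` for every `c > 0`, hence `u ~ H u · √(log (H u / c))`. As `H` is increasing
and `H (f s) = √2 |s| → ∞`, `f s → ∞`, and at `u = f s`, `c = √2` the last equivalence is the claim.
-/

open Topology Asymptotics MeasureTheory

theorem eventually_div_lt_of_deriv_le_mul {f g f' g' : ℝ → ℝ} {c' c : ℝ} (hc : c' < c)
    (hf : ∀ᶠ x in atTop, HasDerivAt f (f' x) x) (hg : ∀ᶠ x in atTop, HasDerivAt g (g' x) x)
    (hfg : ∀ᶠ x in atTop, f' x ≤ c' * g' x) (hg_top : Tendsto g atTop atTop) :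
    ∀ᶠ x in atTop, f x / g x < c := by
  obtain ⟨T, hT⟩ := eventually_atTop.1 (hf.and (hg.and hfg))
  have hderiv : ∀ x ∈ Ici T, HasDerivAt (fun y => f y - c' * g y) (f' x - c' * g' x) x :=
    fun x hx => (hT x hx).1.sub ((hT x hx).2.1.const_mul c')
  have hanti : AntitoneOn (fun y => f y - c' * g y) (Ici T) := by
    refine antitoneOn_of_hasDerivWithinAt_nonpos (convex_Ici T)
      (fun x hx => (hderiv x hx).continuousAt.continuousWithinAt)
      (fun x hx => (hderiv x (interior_subset hx)).hasDerivWithinAt) fun x hx => ?_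
    linarith [(hT x (interior_subset hx)).2.2]
  have hlim : Tendsto (fun x => c' + (f T - c' * g T) / g x) atTop (𝓝 c') := by
    simpa using tendsto_const_nhds.add (tendsto_const_nhds.div_atTop hg_top)
  filter_upwards [eventually_ge_atTop T, hg_top.eventually_gt_atTop 0,
    hlim.eventually (eventually_lt_nhds hc)] with x hxT hgx hx
  calc f x / g x ≤ c' + (f T - c' * g T) / g x := by
        rw [div_le_iff₀ hgx, add_mul, div_mul_cancel₀ _ hgx.ne']
        linarith [hanti (mem_Ici.2 le_rfl) hxT hxT]
    _ < c := hx

theorem lhopital_atTop_of_tendsto_atTop {f g f' g' : ℝ → ℝ} {L : ℝ}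
    (hf : ∀ᶠ x in atTop, HasDerivAt f (f' x) x) (hg : ∀ᶠ x in atTop, HasDerivAt g (g' x) x)
    (hg' : ∀ᶠ x in atTop, 0 < g' x) (hg_top : Tendsto g atTop atTop)
    (hdiv : Tendsto (fun x => f' x / g' x) atTop (𝓝 L)) :
    Tendsto (fun x => f x / g x) atTop (𝓝 L) := by
  refine tendsto_order.2 ⟨fun c hc => ?_, fun c hc => ?_⟩
  · obtain ⟨c', hcc', hc'L⟩ := exists_between hc
    have hlt : ∀ᶠ x in atTop, -f' x ≤ -c' * g' x := by
      filter_upwards [hg', hdiv.eventually (eventually_gt_nhds hc'L)] with x hgx hx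
      rw [lt_div_iff₀ hgx] at hx
      linarith
    filter_upwards [eventually_div_lt_of_deriv_le_mul (neg_lt_neg hcc')
      (f := fun x => -f x) (hf.mono fun x h => h.neg) hg hlt hg_top] with x hx
    rw [neg_div] at hx
    linarith
  · obtain ⟨c', hLc', hc'c⟩ := exists_between hc
    have hlt : ∀ᶠ x in atTop, f' x ≤ c' * g' x := by
      filter_upwards [hg', hdiv.eventually (eventually_lt_nhds hLc')] with x hgx hx
      exact ((div_lt_iff₀ hgx).1 hx).le
    exact eventually_div_lt_of_deriv_le_mul hc'c hf hg hlt hg_top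

theorem Asymptotics.IsEquivalent.sqrt {α : Type*} {l : Filter α} {u v : α → ℝ} (h : u ~[l] v)
    (hv : ∀ᶠ x in l, 0 ≤ v x) : (fun x => √(u x)) ~[l] fun x => √(v x) := by
  have hmax : v =ᶠ[l] fun x => max (v x) 0 := hv.mono fun x hx => (max_eq_left hx).symm
  have := (h.congr_right hmax).rpow (fun x => le_max_right (v x) 0) (r := 1 / 2)
  refine (this.congr_left (Eventually.of_forall fun x => ?_)).congr_right (hv.mono fun x hx => ?_)
  · exact (sqrt_eq_rpow _).symm
  · simp [max_eq_left hx, sqrt_eq_rpow]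

theorem tendsto_atTop_of_monotoneOn_comp {α β γ : Type*} [LinearOrder β] [Preorder γ]
    [NoMaxOrder γ] {l : Filter α} {f : α → β} {g : β → γ} {a : β} (hg : MonotoneOn g (Ici a))
    (hf : ∀ᶠ x in l, a ≤ f x) (hgf : Tendsto (g ∘ f) l atTop) : Tendsto f l atTop := by
  refine tendsto_atTop.2 fun M => ?_
  filter_upwards [hf, hgf.eventually_gt_atTop (g (max M a))] with x hax hx
  by_contra! hlt
  exact hx.not_ge (hg hax (le_max_right M a) (hlt.le.trans (le_max_left M a)))

theorem intervalIntegrable_log_rpow_neg_half {b : ℝ} (hb : 1 ≤ b) :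
    IntervalIntegrable (fun x => log x ^ (-(1:ℝ)/2)) volume 1 b := by
  have hdom : IntervalIntegrable (fun x => √b * (x - 1) ^ (-(1:ℝ)/2)) volume 1 b := by
    simpa using ((intervalIntegral.intervalIntegrable_rpow' (r := -(1:ℝ)/2) (a := 0) (b := b - 1)
      (by norm_num)).comp_sub_right 1).const_mul √b
  refine hdom.mono_fun (measurable_log.pow_const _).aestronglyMeasurable ?_
  rw [uIoc_of_le hb]
  filter_upwards [ae_restrict_mem measurableSet_Ioc] with x ⟨hx1, hxb⟩
  have hx0 : 0 < x - 1 := sub_pos.2 hx1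
  have hlog : (x - 1) / b ≤ log x := by
    have := one_sub_inv_le_log_of_pos (by linarith : 0 < x)
    calc (x - 1) / b ≤ (x - 1) / x := div_le_div_of_nonneg_left hx0.le (by linarith) hxb
      _ = 1 - x⁻¹ := by field_simp
      _ ≤ log x := this
  rw [norm_of_nonneg (rpow_nonneg (log_nonneg hx1.le) _),
    norm_of_nonneg (by positivity)]
  calc log x ^ (-(1:ℝ)/2) ≤ ((x - 1) / b) ^ (-(1:ℝ)/2) :=
        rpow_le_rpow_of_nonpos (by positivity) hlog (by norm_num)
    _ = √b * (x - 1) ^ (-(1:ℝ)/2) := by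
        rw [div_rpow hx0.le (by linarith), sqrt_eq_rpow, div_eq_mul_inv, ← rpow_neg (by linarith)]
        ring_nf

theorem hasDerivAt_Hfun {t : ℝ} (ht : 1 < t) : HasDerivAt Hfun (log t ^ (-(1:ℝ)/2)) t :=
  intervalIntegral.integral_hasDerivAt_right (intervalIntegrable_log_rpow_neg_half ht.le)
    (measurable_log.pow_const _).stronglyMeasurable.stronglyMeasurableAtFilter
    ((continuousAt_log (by positivity)).rpow_const (Or.inl (log_pos ht).ne'))

theorem monotoneOn_Hfun : MonotoneOn Hfun (Ici 1) := by
  intro a ha b hb hab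
  have hab_int := (intervalIntegrable_log_rpow_neg_half ha).symm.trans
    (intervalIntegrable_log_rpow_neg_half hb)
  have hsplit := intervalIntegral.integral_add_adjacent_intervals
    (intervalIntegrable_log_rpow_neg_half ha) hab_int
  have hnonneg : 0 ≤ ∫ x in a..b, log x ^ (-(1:ℝ)/2) :=
    intervalIntegral.integral_nonneg hab fun x hx => rpow_nonneg (log_nonneg (ha.trans hx.1)) _
  unfold Hfun
  linarith

theorem hasDerivAt_div_sqrt_log {t : ℝ} (ht : 1 < t) :
    HasDerivAt (fun x => x / √(log x)) (log t ^ (-(1:ℝ)/2) * (1 - (2 * log t)⁻¹)) t := by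
  have hL := log_pos ht
  have hS : 0 < √(log t) := sqrt_pos.2 hL
  refine ((hasDerivAt_id t).div ((hasDerivAt_log (by positivity)).sqrt hL.ne') hS.ne').congr_deriv ?_
  rw [neg_div, rpow_neg hL.le, ← sqrt_eq_rpow]
  field_simp
  rw [sq_sqrt hL.le, id]
  ring

theorem tendsto_div_sqrt_log_atTop : Tendsto (fun x => x / √(log x)) atTop atTop := by
  refine tendsto_atTop_mono' _ ?_ tendsto_sqrt_atTop
  filter_upwards [eventually_gt_atTop 1] with x hx
  calc √x = x / √x := (div_sqrt).symm
    _ ≤ x / √(log x) := div_le_div_of_nonneg_left (by linarith)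
        (sqrt_pos.2 (log_pos hx)) (sqrt_le_sqrt (log_le_self (by linarith)))

theorem isEquivalent_Hfun : Hfun ~[atTop] fun t => t / √(log t) := by
  have hL : ∀ᶠ t in atTop, 1 < log t := tendsto_log_atTop.eventually_gt_atTop 1
  have hinv : Tendsto (fun t => (2 * log t)⁻¹) atTop (𝓝 0) :=
    (tendsto_log_atTop.const_mul_atTop two_pos).inv_tendsto_atTop
  have hratio : Tendsto (fun t => (1 - (2 * log t)⁻¹)⁻¹) atTop (𝓝 1) := by
    simpa using (tendsto_const_nhds.sub hinv).inv₀ (by norm_num : (1:ℝ) - 0 ≠ 0)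
  refine isEquivalent_of_tendsto_one (lhopital_atTop_of_tendsto_atTop
    (f' := fun t => log t ^ (-(1:ℝ)/2)) (g' := fun t => log t ^ (-(1:ℝ)/2) * (1 - (2 * log t)⁻¹))
    ?_ ?_ ?_ tendsto_div_sqrt_log_atTop (hratio.congr' ?_))
  · filter_upwards [eventually_gt_atTop 1] with t ht using hasDerivAt_Hfun ht
  · filter_upwards [eventually_gt_atTop 1] with t ht using hasDerivAt_div_sqrt_log ht
  · filter_upwards [hL] with t ht
    have : (2 * log t)⁻¹ < 1 := inv_lt_one_of_one_lt₀ (by linarith)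
    exact mul_pos (rpow_pos_of_pos (by linarith) _) (by linarith)
  · filter_upwards [hL] with t ht
    rw [div_mul_cancel_left₀ (rpow_pos_of_pos (by linarith) _).ne']

theorem isEquivalent_log_Hfun_div {c : ℝ} (hc : 0 < c) :
    (fun u => log (Hfun u / c)) ~[atTop] log := by
  have hlog : (fun u => log (Hfun u / c)) ~[atTop] fun u => log (u / √(log u) / c) :=
    (isEquivalent_Hfun.div IsEquivalent.refl).log
      (tendsto_div_sqrt_log_atTop.atTop_div_const hc)
  have hsmall : (fun u => 2⁻¹ * log (log u) + log c) =o[atTop] log :=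
    ((isLittleO_log_id_atTop.comp_tendsto tendsto_log_atTop).const_mul_left 2⁻¹).add
      isLittleO_const_log_atTop
  refine hlog.trans ((IsEquivalent.refl.sub_isLittleO hsmall).congr_left ?_)
  filter_upwards [eventually_gt_atTop 1] with u hu
  have hL := log_pos hu
  rw [Pi.sub_apply, log_div (by positivity) hc.ne', log_div (by positivity) (sqrt_pos.2 hL).ne',
    log_sqrt hL.le]
  ring

theorem tendsto_div_Hfun_mul_sqrt_log {c : ℝ} (hc : 0 < c) :
    Tendsto (fun u => u / (Hfun u * √(log (Hfun u / c)))) atTop (𝓝 1) := by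
  have hequiv : (fun u => Hfun u * √(log (Hfun u / c))) ~[atTop] id := by
    refine (isEquivalent_Hfun.mul ((isEquivalent_log_Hfun_div hc).sqrt ?_)).congr_right ?_
    · filter_upwards [eventually_ge_atTop 1] with u hu using log_nonneg hu
    · filter_upwards [eventually_gt_atTop 1] with u hu
      exact div_mul_cancel₀ u (sqrt_pos.2 (log_pos hu)).ne'
  exact (isEquivalent_iff_tendsto_one
    ((hequiv.symm.tendsto_atTop tendsto_id).eventually_ne_atTop 0)).1 hequiv.symm

theorem growth_of_entire_ODE_solution (f : ℝ → ℝ)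
    (hf : ∀ s : ℝ, f s ∈ Ici 1 ∧ Hfun (f s) = Real.sqrt 2 * |s|) :
    Tendsto (fun s : ℝ => f s / (Real.sqrt 2 * |s| * Real.sqrt (Real.log |s|)))
      (atBot ⊔ atTop) (nhds 1) := by
  have hs2 : 0 < √2 := by positivity
  have hHf : Tendsto (Hfun ∘ f) (atBot ⊔ atTop) atTop := by
    simpa only [Function.comp_def, (hf _).2] using
      (tendsto_abs_atBot_atTop.sup tendsto_abs_atTop_atTop).const_mul_atTop hs2
  have hf_top : Tendsto f (atBot ⊔ atTop) atTop :=
    tendsto_atTop_of_monotoneOn_comp monotoneOn_Hfun (Eventually.of_forall fun s => (hf s).1) hHf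
  refine ((tendsto_div_Hfun_mul_sqrt_log hs2).comp hf_top).congr fun s => ?_
  simp only [Function.comp_apply, (hf s).2, mul_div_cancel_left₀ _ hs2.ne']
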